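/- Let n = 9 and let J = {128,129,130,131} ∪ {188,189,190,191} ∪ {220,221,222,223} ∪ {231} ∪ {235,236,…,255}. For every j with 128 ≤ j ≤ 255 and j ∉ J, the conjugate pair (ε_{255−j}, ε_j) is a twin: for every a ∈ Q, min(|ε_{255−j} a|, |ε_j a|) ≤ ‖a‖. -/

import Mathlib

/-!
Since `ε_{255-j} + ε_j = (2,0,…,0)`, the values `X = ε_{255-j} a` and `Y = ε_j a` satisfy
`X + Y = 2 a₁ ≤ 2 ‖a‖`, so `min (|X|, |Y|) ≤ ‖a‖` as soon as `X, Y ≥ -‖a‖`.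

For the lower bound `-ε a ≤ ‖a‖` on `Q`, compare `-ε` with the unit vector `u / r` whose first
`r²` coordinates are `1 / r`: if every partial sum of `-ε` is at most the corresponding partial
sum of `u / r`, Abel summation against the nonincreasing, nonnegative `a` gives
`-ε a ≤ (a₁ + ⋯ + a_{r²}) / r ≤ ‖a‖` by Cauchy–Schwarz. For every sign vector involved one of
`r = 1, 2, 3` works, which is checked by computation.
-/

/-- The sign vector `ε_i ∈ {+1,-1}^9`: the `m`-th coordinate (zero-based `m`)
is `+1` iff the binary digit of `i` at position `8 - m` is `0`. -/
def eps (i : ℕ) : Fin 9 → ℝ := fun m => if Nat.testBit i (8 - (m : ℕ)) then -1 else 1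

/-- The cone `Q = {a : a₁ ≥ a₂ ≥ ⋯ ≥ a₉ ≥ 0}`. -/
def inQ (a : Fin 9 → ℝ) : Prop :=
  (∀ i j : Fin 9, i ≤ j → a j ≤ a i) ∧ ∀ i, 0 ≤ a i

open Finset

theorem sum_mul_nonneg_of_antitone_of_partialSums_nonneg {R : Type*} [CommRing R] [LinearOrder R]
    [IsStrictOrderedRing R] {a f : ℕ → R} {n : ℕ} (ha : Antitone a) (ha0 : ∀ i, 0 ≤ a i)
    (hf : ∀ k ≤ n, 0 ≤ ∑ i ∈ range k, f i) :
    0 ≤ ∑ i ∈ range n, f i * a i := by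
  have h_parts := sum_range_by_parts a f n
  simp only [smul_eq_mul] at h_parts
  simp_rw [mul_comm (f _), h_parts, sub_nonneg]
  refine (sum_nonpos fun i hi => ?_).trans (mul_nonneg (ha0 _) (hf n le_rfl))
  have hi : i + 1 ≤ n := by rw [mem_range] at hi; omega
  exact mul_nonpos_of_nonpos_of_nonneg (sub_nonpos.2 (ha i.le_succ)) (hf _ hi)

theorem sum_range_le_sqrt_mul_sum_sq (a : ℕ → ℝ) (L : ℕ) :
    ∑ i ∈ range L, a i ≤ √(L * ∑ i ∈ range L, a i ^ 2) := by
  refine (le_abs_self _).trans (Real.abs_le_sqrt ?_)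
  simpa using sq_sum_le_card_mul_sum_sq (s := range L) (f := a)

theorem sum_range_boole_lt (k L : ℕ) :
    ∑ i ∈ range k, (if i < L then (1 : ℝ) else 0) = (min k L : ℕ) := by
  have h : {i ∈ range k | i < L} = range (min k L) := by ext; simp
  rw [sum_boole, h, card_range]

theorem sum_mul_le_sqrt_sum_sq_of_partialSums_le {τ a : ℕ → ℝ} {n r : ℕ} (hr : 0 < r)
    (hrn : r ^ 2 ≤ n) (ha : Antitone a) (ha0 : ∀ i, 0 ≤ a i)
    (hτ : ∀ k ≤ n, r * ∑ i ∈ range k, τ i ≤ k ∧ r * ∑ i ∈ range k, τ i ≤ r ^ 2) :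
    ∑ i ∈ range n, τ i * a i ≤ √(∑ i ∈ range n, a i ^ 2) := by
  set ν : ℕ → ℝ := fun i => if i < r ^ 2 then 1 else 0
  have h_abel : r * ∑ i ∈ range n, τ i * a i ≤ ∑ i ∈ range n, ν i * a i := by
    have := sum_mul_nonneg_of_antitone_of_partialSums_nonneg (f := fun i => ν i - r * τ i) ha ha0
      fun k hk => by
        rw [sum_sub_distrib, ← mul_sum, sum_range_boole_lt, sub_nonneg, Nat.cast_min]
        exact le_min (hτ k hk).1 (by exact_mod_cast (hτ k hk).2)
    simpa only [sub_mul, sum_sub_distrib, sub_nonneg, mul_assoc, ← mul_sum] using this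
  have h_block : ∑ i ∈ range n, ν i * a i = ∑ i ∈ range (r ^ 2), a i := by
    simp only [ν, ite_mul, one_mul, zero_mul]
    rw [← sum_filter]
    congr 1
    ext; simp; omega
  have h_cs : ∑ i ∈ range (r ^ 2), a i ≤ r * √(∑ i ∈ range n, a i ^ 2) :=
    calc ∑ i ∈ range (r ^ 2), a i ≤ √((r : ℝ) ^ 2 * ∑ i ∈ range (r ^ 2), a i ^ 2) := by
          exact_mod_cast sum_range_le_sqrt_mul_sum_sq a (r ^ 2)
      _ = r * √(∑ i ∈ range (r ^ 2), a i ^ 2) := by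
          rw [Real.sqrt_mul (by positivity), Real.sqrt_sq (by positivity)]
      _ ≤ r * √(∑ i ∈ range n, a i ^ 2) := by
          gcongr
  have hr' : (0 : ℝ) < r := by exact_mod_cast hr
  exact le_of_mul_le_mul_left (by linarith) hr'

def epsInt (k i : ℕ) : ℤ := if Nat.testBit k (8 - i) then -1 else 1

theorem eps_eq_epsInt (k : ℕ) (i : Fin 9) : eps k i = epsInt k i := by
  unfold eps epsInt; split <;> simp

/-- In partial sums, `-ε_k` is dominated by the unit vector with `r²` leading entries `1 / r`
(everything multiplied by `r` to stay in `ℤ`). -/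
def HasBlockCertificate (k : ℕ) : Prop :=
  ∃ r ∈ Icc (1 : ℕ) 3, ∀ m ≤ 9,
    (r : ℤ) * ∑ i ∈ range m, -epsInt k i ≤ m ∧ (r : ℤ) * ∑ i ∈ range m, -epsInt k i ≤ r ^ 2

instance : DecidablePred HasBlockCertificate :=
  fun _ => inferInstanceAs (Decidable (∃ r ∈ Icc 1 3, _))

def extendByZero {n : ℕ} (a : Fin n → ℝ) (i : ℕ) : ℝ := if h : i < n then a ⟨i, h⟩ else 0

theorem extendByZero_nonneg {a : Fin 9 → ℝ} (ha : inQ a) (i : ℕ) : 0 ≤ extendByZero a i := by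
  unfold extendByZero; split
  exacts [ha.2 _, le_rfl]

theorem antitone_extendByZero {a : Fin 9 → ℝ} (ha : inQ a) : Antitone (extendByZero a) := by
  intro i j hij
  by_cases hj : j < 9
  · simp only [extendByZero, hj, lt_of_le_of_lt hij hj, dite_true]
    exact ha.1 _ _ (Fin.mk_le_mk.2 hij)
  · simp only [extendByZero, hj, dite_false]
    exact extendByZero_nonneg ha i

theorem sum_fin_eq_sum_range_extendByZero {n : ℕ} (F : ℕ → ℝ → ℝ) (a : Fin n → ℝ) :
    ∑ i : Fin n, F i (a i) = ∑ i ∈ range n, F i (extendByZero a i) := by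
  rw [← Fin.sum_univ_eq_sum_range (fun i => F i (extendByZero a i))]
  simp [extendByZero]

theorem neg_sum_eps_mul_le_of_hasBlockCertificate {k : ℕ} (hk : HasBlockCertificate k)
    {a : Fin 9 → ℝ} (ha : inQ a) : -∑ i, eps k i * a i ≤ √(∑ i, a i ^ 2) := by
  obtain ⟨r, hr, hcert⟩ := hk
  rw [mem_Icc] at hr
  rw [← sum_neg_distrib]
  simp only [eps_eq_epsInt, ← neg_mul]
  rw [sum_fin_eq_sum_range_extendByZero (fun i x => -(epsInt k i : ℝ) * x),
    sum_fin_eq_sum_range_extendByZero (fun _ x => x ^ 2)]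
  refine sum_mul_le_sqrt_sum_sq_of_partialSums_le hr.1 (Nat.pow_le_pow_left hr.2 2) (antitone_extendByZero ha)
    (extendByZero_nonneg ha) fun m hm => ?_
  obtain ⟨h1, h2⟩ := hcert m hm
  exact ⟨by exact_mod_cast h1, by exact_mod_cast h2⟩

theorem testBit_255_sub {j : ℕ} (hj : j ≤ 255) (p : ℕ) :
    Nat.testBit (255 - j) p = (decide (p < 8) && !Nat.testBit j p) := by
  have := Nat.testBit_two_pow_sub_succ (n := 8) (x := j) (by norm_num; omega) p
  rwa [show 2 ^ 8 - (j + 1) = 255 - j by omega] at this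

theorem eps_conj_add_eps {j : ℕ} (hj : j ≤ 255) (i : Fin 9) :
    eps (255 - j) i + eps j i = if i = 0 then 2 else 0 := by
  have hj8 : Nat.testBit j 8 = false := Nat.testBit_lt_two_pow (by omega)
  by_cases hi : i = 0
  · subst hi
    norm_num [eps, testBit_255_sub hj, hj8]
  · have hi8 : 8 - (i : ℕ) < 8 := by have := Fin.pos_iff_ne_zero.2 hi; omega
    simp only [eps, testBit_255_sub hj, hi8, hi]
    cases Nat.testBit j (8 - i) <;> norm_num

theorem sum_eps_conj_add_sum_eps {j : ℕ} (hj : j ≤ 255) (a : Fin 9 → ℝ) :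
    ∑ i, eps (255 - j) i * a i + ∑ i, eps j i * a i = 2 * a 0 := by
  simp_rw [← sum_add_distrib, ← add_mul, eps_conj_add_eps hj, ite_mul, zero_mul]
  simp

theorem min_abs_le_of_add_le {x y c : ℝ} (hxy : x + y ≤ 2 * c) (hx : -x ≤ c) (hy : -y ≤ c) :
    min |x| |y| ≤ c := by
  rcases le_total x y with h | h
  · exact (min_le_left _ _).trans (abs_le.2 ⟨by linarith, by linarith⟩)
  · exact (min_le_right _ _).trans (abs_le.2 ⟨by linarith, by linarith⟩)

set_option maxRecDepth 10000 in
theorem hasBlockCertificate_of_twinIndex : ∀ j ∈ Icc 128 255,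
    j ∉ ({128, 129, 130, 131, 188, 189, 190, 191, 220, 221, 222, 223, 231} : Finset ℕ) ∪ Icc 235 255 →
    HasBlockCertificate j ∧ HasBlockCertificate (255 - j) := by
  decide

theorem stmt_4 (j : ℕ) (h1 : 128 ≤ j) (h2 : j ≤ 255)
    (hJ : j ∉ ({128, 129, 130, 131, 188, 189, 190, 191, 220, 221, 222, 223, 231} : Finset ℕ)
            ∪ Finset.Icc 235 255)
    (a : Fin 9 → ℝ) (ha : inQ a) :
    min |∑ i, eps (255 - j) i * a i| |∑ i, eps j i * a i| ≤ Real.sqrt (∑ i, a i ^ 2) := by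
  obtain ⟨hcert, hcert'⟩ := hasBlockCertificate_of_twinIndex j (mem_Icc.2 ⟨h1, h2⟩) hJ
  have ha0 : a 0 ≤ √(∑ i, a i ^ 2) :=
    Real.le_sqrt_of_sq_le (single_le_sum (fun i _ => sq_nonneg (a i)) (mem_univ 0))
  refine min_abs_le_of_add_le ?_ (neg_sum_eps_mul_le_of_hasBlockCertificate hcert' ha)
    (neg_sum_eps_mul_le_of_hasBlockCertificate hcert ha)
  rw [sum_eps_conj_add_sum_eps h2]
  linarith
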